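/- Let G be a finite simple graph and v a vertex of G such that there exists u ∈ N_G(v) with deg_G(u) ≥ deg_G(v). If S is a strong dominating set of the vertex-deleted graph G − v, then S ∪ N_G(v) is a strong dominating set of G; consequently γst(G) ≤ γst(G − v) + deg_G(v). -/

import Mathlib

/-- The degree of a vertex `x` in a graph `G`. -/
noncomputable def sdeg {V : Type*} (G : SimpleGraph V) (x : V) : ℕ :=
  (G.neighborSet x).ncard

/-- `D` is a strong dominating set of `G`: every vertex `x ∉ D` has a neighbor
`y ∈ D` with `deg x ≤ deg y`. -/
def IsStrongDominating {V : Type*} (G : SimpleGraph V) (D : Set V) : Prop :=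
  ∀ x ∉ D, ∃ y ∈ D, G.Adj x y ∧ sdeg G x ≤ sdeg G y

/-- The strong domination number of `G`. -/
noncomputable def sdn {V : Type*} (G : SimpleGraph V) : ℕ :=
  sInf {n | ∃ D : Set V, IsStrongDominating G D ∧ D.ncard = n}

/-- Vertex deletion `G - v`: the induced subgraph on the complement of `{v}`. -/
def delVtx {V : Type*} (G : SimpleGraph V) (v : V) : SimpleGraph {x : V // x ≠ v} where
  Adj a b := G.Adj a.1 b.1
  symm := ⟨fun a b h => G.symm.symm _ _ h⟩
  loopless := ⟨fun a h => G.loopless.irrefl a.1 h⟩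

/-- Vertex contraction `G / v`: delete `v` and put a clique on its open neighborhood. -/
def contractVtx {V : Type*} (G : SimpleGraph V) (v : V) : SimpleGraph {x : V // x ≠ v} where
  Adj a b := a ≠ b ∧ (G.Adj a.1 b.1 ∨ (G.Adj v a.1 ∧ G.Adj v b.1))
  symm := by
    refine ⟨?_⟩
    rintro a b ⟨hab, h | ⟨ha, hb⟩⟩
    · exact ⟨hab.symm, Or.inl h.symm⟩
    · exact ⟨hab.symm, Or.inr ⟨hb, ha⟩⟩
  loopless := by refine ⟨?_⟩; rintro a ⟨h, -⟩; exact h rfl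

/-- `G ⊙ v`: remove all edges between any pair of neighbors of `v`. -/
def odotVtx {V : Type*} (G : SimpleGraph V) (v : V) : SimpleGraph V where
  Adj x y := G.Adj x y ∧ ¬(G.Adj v x ∧ G.Adj v y)
  symm := by
    refine ⟨?_⟩
    rintro x y ⟨h, hn⟩
    exact ⟨h.symm, fun hc => hn ⟨hc.2, hc.1⟩⟩
  loopless := by refine ⟨?_⟩; rintro x ⟨h, -⟩; exact G.loopless.irrefl x h

/-- Edge contraction `G / uv`: merge `v` into `u`. -/
def contractEdge {V : Type*} (G : SimpleGraph V) (u v : V) : SimpleGraph {x : V // x ≠ v} where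
  Adj a b := a ≠ b ∧ (G.Adj a.1 b.1 ∨ (a.1 = u ∧ G.Adj v b.1) ∨ (b.1 = u ∧ G.Adj v a.1))
  symm := by
    refine ⟨?_⟩
    rintro a b ⟨hab, h | h | h⟩
    · exact ⟨hab.symm, Or.inl h.symm⟩
    · exact ⟨hab.symm, Or.inr (Or.inr h)⟩
    · exact ⟨hab.symm, Or.inr (Or.inl h)⟩
  loopless := by refine ⟨?_⟩; rintro a ⟨h, -⟩; exact h rfl

/-- The star `K_{1,n}` with center `none` and leaves `some i`. -/
def starG (n : ℕ) : SimpleGraph (Option (Fin n)) where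
  Adj a b := (a = none ∧ b ≠ none) ∨ (a ≠ none ∧ b = none)
  symm := by
    refine ⟨?_⟩
    rintro a b (⟨h1, h2⟩ | ⟨h1, h2⟩)
    · exact Or.inr ⟨h2, h1⟩
    · exact Or.inl ⟨h2, h1⟩
  loopless := by
    refine ⟨?_⟩
    rintro a (⟨h1, h2⟩ | ⟨h1, h2⟩)
    exacts [h2 h1, h1 h2]

/-- The path graph `P_n` on vertices `0, …, n-1`, consecutive integers adjacent. -/
def pathG (n : ℕ) : SimpleGraph (Fin n) where
  Adj i j := i.1 + 1 = j.1 ∨ j.1 + 1 = i.1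
  symm := ⟨fun i j h => h.symm⟩
  loopless := by refine ⟨?_⟩; rintro i (h | h) <;> omega

section StrongDomination

variable {V : Type*} (G : SimpleGraph V) (v : V)

lemma sdeg_delVtx (a : {x : V // x ≠ v}) :
    sdeg (delVtx G v) a = (G.neighborSet a \ {v}).ncard := by
  rw [sdeg, ← Set.ncard_image_of_injective _ Subtype.val_injective]
  congr 1
  ext x
  simp [delVtx, and_comm]

lemma sdeg_delVtx_le (a : {x : V // x ≠ v}) : sdeg (delVtx G v) a ≤ sdeg G a :=
  (sdeg_delVtx G v a).trans_le (Set.ncard_sdiff_singleton_le _ _)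

lemma sdeg_delVtx_of_not_adj {a : {x : V // x ≠ v}} (h : ¬G.Adj a v) :
    sdeg (delVtx G v) a = sdeg G a := by
  rw [sdeg_delVtx, Set.sdiff_singleton_eq_self (show v ∉ G.neighborSet a from h), sdeg]

lemma isStrongDominating_univ : IsStrongDominating G Set.univ :=
  fun x hx => absurd (Set.mem_univ x) hx

lemma sdn_le_ncard {D : Set V} (hD : IsStrongDominating G D) : sdn G ≤ D.ncard :=
  Nat.sInf_le ⟨D, hD, rfl⟩

lemma exists_isStrongDominating_ncard_eq_sdn :
    ∃ D : Set V, IsStrongDominating G D ∧ D.ncard = sdn G :=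
  Nat.sInf_mem (s := {n | ∃ D : Set V, IsStrongDominating G D ∧ D.ncard = n})
    ⟨_, Set.univ, isStrongDominating_univ G, rfl⟩

/-- A vertex `x ≠ v` outside `N(v)` keeps its degree in `G - v`, while the dominating vertex can
only gain degree; `v` itself is dominated by its neighbour `u` of larger degree. -/
lemma IsStrongDominating.image_val_union_neighborSet
    (hv : ∃ u ∈ G.neighborSet v, sdeg G v ≤ sdeg G u)
    {S : Set {x : V // x ≠ v}} (hS : IsStrongDominating (delVtx G v) S) :
    IsStrongDominating G (Subtype.val '' S ∪ G.neighborSet v) := by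
  intro x hx
  simp only [Set.mem_union, not_or] at hx
  obtain ⟨hxS, hxN⟩ := hx
  by_cases hxv : x = v
  · subst hxv
    obtain ⟨u, hu, hdeg⟩ := hv
    exact ⟨u, Or.inr hu, hu, hdeg⟩
  · obtain ⟨y, hyS, hxy, hdeg⟩ := hS ⟨x, hxv⟩ fun h => hxS ⟨_, h, rfl⟩
    refine ⟨y, Or.inl ⟨y, hyS, rfl⟩, hxy, ?_⟩
    calc sdeg G x = sdeg (delVtx G v) ⟨x, hxv⟩ :=
          (sdeg_delVtx_of_not_adj G v (a := ⟨x, hxv⟩) fun h => hxN h.symm).symm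
      _ ≤ sdeg (delVtx G v) y := hdeg
      _ ≤ sdeg G y := sdeg_delVtx_le G v y

end StrongDomination

theorem strongDominating_union_neighborSet_general {V : Type*} (G : SimpleGraph V)
    (v : V) (hv : ∃ u ∈ G.neighborSet v, sdeg G v ≤ sdeg G u)
    (S : Set {x : V // x ≠ v}) (hS : IsStrongDominating (delVtx G v) S) :
    IsStrongDominating G (Subtype.val '' S ∪ G.neighborSet v) ∧
    sdn G ≤ sdn (delVtx G v) + sdeg G v := by
  refine ⟨hS.image_val_union_neighborSet G v hv, ?_⟩
  obtain ⟨S₀, hS₀, hcard⟩ := exists_isStrongDominating_ncard_eq_sdn (delVtx G v)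
  calc sdn G ≤ (Subtype.val '' S₀ ∪ G.neighborSet v).ncard :=
        sdn_le_ncard G (hS₀.image_val_union_neighborSet G v hv)
    _ ≤ (Subtype.val '' S₀).ncard + (G.neighborSet v).ncard := Set.ncard_union_le _ _
    _ = sdn (delVtx G v) + sdeg G v := by
        rw [Set.ncard_image_of_injective _ Subtype.val_injective, hcard, sdeg]

/-- if some neighbor u of v has deg_G(u) ≥ deg_G(v) and S is a strong
dominating set of G − v, then S ∪ N_G(v) is a strong dominating set of G; consequently
γst(G) ≤ γst(G − v) + deg_G(v). -/
theorem strongDominating_union_neighborSet {V : Type*} [Fintype V] (G : SimpleGraph V)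
    (v : V) (hv : ∃ u ∈ G.neighborSet v, sdeg G v ≤ sdeg G u)
    (S : Set {x : V // x ≠ v}) (hS : IsStrongDominating (delVtx G v) S) :
    IsStrongDominating G (Subtype.val '' S ∪ G.neighborSet v) ∧
    sdn G ≤ sdn (delVtx G v) + sdeg G v :=
  strongDominating_union_neighborSet_general G v hv S hS
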